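/- Let v and w be words over {0,1,•} of lengths M−1 and N−1 respectively. Then Δ ↦ dec(Δ) restricts to a bijection from the set of M,N-invariant sets Δ fitting (0v, 0w) with M+N ∈ Δ onto the set of M,N-invariant sets fitting (v1, w1), and to a bijection from the set of M,N-invariant sets Δ fitting (0v, 0w) with M+N ∉ Δ onto the set of M,N-invariant sets fitting (v0, w0). -/
import Mathlib


/-- The alphabet {0, 1, •}. -/
inductive Symb where
  | zero : Symb
  | one : Symb
  | bullet : Symb
deriving DecidableEq

/-- An `M,N`-invariant set: a subset of ℕ with finite complement,
closed under adding `M` and adding `N`. -/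
def Invariant (M N : ℕ) (Δ : Set ℕ) : Prop :=
  {n : ℕ | n ∉ Δ}.Finite ∧ ∀ i ∈ Δ, i + M ∈ Δ ∧ i + N ∈ Δ

/-- `c` is a north step of `Δ`: `c ∉ Δ` and `c + N ∈ Δ`. -/
def NorthStep (N : ℕ) (Δ : Set ℕ) (c : ℕ) : Prop := c ∉ Δ ∧ c + N ∈ Δ

/-- `c` is an east step of `Δ`: `c ∉ Δ` and `c + M ∈ Δ`. -/
def EastStep (M : ℕ) (Δ : Set ℕ) (c : ℕ) : Prop := c ∉ Δ ∧ c + M ∈ Δ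

/-- `area Δ` is the number of `c ≥ M + N` with `c ∉ Δ`. -/
noncomputable def area (M N : ℕ) (Δ : Set ℕ) : ℕ := {c : ℕ | M + N ≤ c ∧ c ∉ Δ}.ncard

/-- `pdinv Δ` is the number of pairs `(c, d)` with `c < d`, `M ≤ d < c + M`,
`c` a north step of `Δ`, and `d ∉ Δ`. -/
noncomputable def pdinv (M N : ℕ) (Δ : Set ℕ) : ℕ :=
  {p : ℕ × ℕ | p.1 < p.2 ∧ M ≤ p.2 ∧ p.2 < p.1 + M ∧ NorthStep N Δ p.1 ∧ p.2 ∉ Δ}.ncard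

/-- `Δ` fits the pair of words `(v, w)`, where `v` has length `M` and `w` has length `N`. -/
def Fits (M N : ℕ) (Δ : Set ℕ) (v w : List Symb) : Prop :=
  v.length = M ∧ w.length = N ∧
  (∀ (i : ℕ) (hi : i < v.length),
    (v.get ⟨i, hi⟩ = Symb.bullet ↔ i ∈ Δ) ∧
    (v.get ⟨i, hi⟩ = Symb.one ↔ NorthStep N Δ i) ∧
    (v.get ⟨i, hi⟩ = Symb.zero ↔ (i ∉ Δ ∧ i + N ∉ Δ))) ∧
  (∀ (i : ℕ) (hi : i < w.length),
    (w.get ⟨i, hi⟩ = Symb.bullet ↔ i ∈ Δ) ∧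
    (w.get ⟨i, hi⟩ = Symb.one ↔ EastStep M Δ i) ∧
    (w.get ⟨i, hi⟩ = Symb.zero ↔ (i ∉ Δ ∧ i + M ∉ Δ)))

/-- Decrement: `dec Δ = {i : ℕ | i + 1 ∈ Δ}`. -/
def dec (Δ : Set ℕ) : Set ℕ := {i : ℕ | i + 1 ∈ Δ}

section Aux

/-- Increment of a set. -/
def inc (Γ : Set ℕ) : Set ℕ := {n | ∃ m ∈ Γ, n = m + 1}

lemma mem_dec {Δ : Set ℕ} {i : ℕ} : i ∈ dec Δ ↔ i + 1 ∈ Δ := Iff.rfl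

lemma mem_inc {Γ : Set ℕ} {m : ℕ} : m + 1 ∈ inc Γ ↔ m ∈ Γ := by
  constructor
  · rintro ⟨k, hk, he⟩
    obtain rfl : k = m := by omega
    exact hk
  · intro h; exact ⟨m, h, rfl⟩

lemma zero_not_mem_inc {Γ : Set ℕ} : 0 ∉ inc Γ := by
  rintro ⟨k, _, h⟩; omega

lemma dec_inc (Γ : Set ℕ) : dec (inc Γ) = Γ := by
  ext i; exact mem_inc

lemma inc_dec {Δ : Set ℕ} (h0 : 0 ∉ Δ) : inc (dec Δ) = Δ := by
  ext n
  cases n with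
  | zero => simp [zero_not_mem_inc, h0]
  | succ m => rw [mem_inc, mem_dec]

lemma invariant_dec {M N : ℕ} {Δ : Set ℕ} (h : Invariant M N Δ) : Invariant M N (dec Δ) := by
  obtain ⟨hfin, hcl⟩ := h
  constructor
  · have : {n : ℕ | n ∉ dec Δ} = (fun n => n + 1) ⁻¹' {n : ℕ | n ∉ Δ} := rfl
    rw [this]
    exact Set.Finite.preimage (fun a _ b _ h => by omega) hfin
  · intro i hi
    have h1 := hcl (i + 1) hi
    refine ⟨?_, ?_⟩
    · rw [mem_dec, show i + M + 1 = i + 1 + M by omega]; exact h1.1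
    · rw [mem_dec, show i + N + 1 = i + 1 + N by omega]; exact h1.2

lemma invariant_inc {M N : ℕ} {Γ : Set ℕ} (h : Invariant M N Γ) : Invariant M N (inc Γ) := by
  obtain ⟨hfin, hcl⟩ := h
  constructor
  · apply Set.Finite.subset (Set.Finite.insert 0 (Set.Finite.image (fun n => n + 1) hfin))
    intro n hn
    cases n with
    | zero => exact Set.mem_insert 0 _
    | succ m =>
      right
      exact ⟨m, fun hm => hn (mem_inc.mpr hm), rfl⟩
  · rintro i hi
    obtain ⟨m, hm, rfl⟩ := hi
    have h1 := hcl m hm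
    constructor
    · rw [show m + 1 + M = (m + M) + 1 by omega, mem_inc]; exact h1.1
    · rw [show m + 1 + N = (m + N) + 1 by omega, mem_inc]; exact h1.2

lemma fits_dec {M N : ℕ} {v w : List Symb} (hv : v.length + 1 = M) (hw : w.length + 1 = N)
    {Δ : Set ℕ} (hF : Fits M N Δ (Symb.zero :: v) (Symb.zero :: w))
    (b : Symb) (hb1 : b = Symb.one ↔ M + N ∈ Δ) (hb0 : b = Symb.zero ↔ M + N ∉ Δ)
    (hbb : b ≠ Symb.bullet) :
    Fits M N (dec Δ) (v ++ [b]) (w ++ [b]) := by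
  obtain ⟨-, -, hFv, hFw⟩ := hF
  have hMnot : M ∉ Δ := by
    have := ((hFw 0 (by simp)).2.2.mp rfl).2
    simpa using this
  have hNnot : N ∉ Δ := by
    have := ((hFv 0 (by simp)).2.2.mp rfl).2
    simpa using this
  refine ⟨by simpa using hv, by simpa using hw, ?_, ?_⟩
  · intro i hi
    have hi' : i < v.length + 1 := by simpa using hi
    rcases Nat.lt_or_ge i v.length with h | h
    · have key := hFv (i + 1) (by simpa using by omega)
      have hget : (v ++ [b]).get ⟨i, hi⟩ = (Symb.zero :: v).get ⟨i + 1, by simpa using by omega⟩ := by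
        simp [List.get_eq_getElem, List.getElem_append_left h]
      rw [hget]
      refine ⟨key.1, ?_, ?_⟩
      · rw [key.2.1]
        unfold NorthStep
        rw [mem_dec, mem_dec, show i + N + 1 = i + 1 + N by omega]
      · rw [key.2.2, mem_dec, mem_dec, show i + N + 1 = i + 1 + N by omega]
    · obtain rfl : i = v.length := by omega
      have hget : (v ++ [b]).get ⟨v.length, hi⟩ = b := by
        simp [List.get_eq_getElem]
      rw [hget]
      have hMN1 : v.length + 1 = M := hv
      refine ⟨?_, ?_, ?_⟩
      · constructor
        · intro h'; exact absurd h' hbb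
        · intro h'; rw [mem_dec, hMN1] at h'; exact absurd h' hMnot
      · rw [hb1]
        unfold NorthStep
        rw [mem_dec, mem_dec, hMN1, show v.length + N + 1 = M + N by omega]
        exact ⟨fun h => ⟨hMnot, h⟩, fun h => h.2⟩
      · rw [hb0, mem_dec, mem_dec, hMN1, show v.length + N + 1 = M + N by omega]
        exact ⟨fun h => ⟨hMnot, h⟩, fun h => h.2⟩
  · intro i hi
    have hi' : i < w.length + 1 := by simpa using hi
    rcases Nat.lt_or_ge i w.length with h | h
    · have key := hFw (i + 1) (by simpa using by omega)
      have hget : (w ++ [b]).get ⟨i, hi⟩ = (Symb.zero :: w).get ⟨i + 1, by simpa using by omega⟩ := by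
        simp [List.get_eq_getElem, List.getElem_append_left h]
      rw [hget]
      refine ⟨key.1, ?_, ?_⟩
      · rw [key.2.1]
        unfold EastStep
        rw [mem_dec, mem_dec, show i + M + 1 = i + 1 + M by omega]
      · rw [key.2.2, mem_dec, mem_dec, show i + M + 1 = i + 1 + M by omega]
    · obtain rfl : i = w.length := by omega
      have hget : (w ++ [b]).get ⟨w.length, hi⟩ = b := by
        simp [List.get_eq_getElem]
      rw [hget]
      have hN1 : w.length + 1 = N := hw
      refine ⟨?_, ?_, ?_⟩
      · constructor
        · intro h'; exact absurd h' hbb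
        · intro h'; rw [mem_dec, hN1] at h'; exact absurd h' hNnot
      · rw [hb1]
        unfold EastStep
        rw [mem_dec, mem_dec, hN1, show w.length + M + 1 = M + N by omega]
        exact ⟨fun h => ⟨hNnot, h⟩, fun h => h.2⟩
      · rw [hb0, mem_dec, mem_dec, hN1, show w.length + M + 1 = M + N by omega]
        exact ⟨fun h => ⟨hNnot, h⟩, fun h => h.2⟩

lemma fits_inc {M N : ℕ} {v w : List Symb} (hv : v.length + 1 = M) (hw : w.length + 1 = N)
    {Γ : Set ℕ} (b : Symb) (hb : b = Symb.one ∨ b = Symb.zero)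
    (hF : Fits M N Γ (v ++ [b]) (w ++ [b])) :
    Fits M N (inc Γ) (Symb.zero :: v) (Symb.zero :: w) ∧ (M + N ∈ inc Γ ↔ b = Symb.one) := by
  obtain ⟨-, -, hFv, hFw⟩ := hF
  have hbb : b ≠ Symb.bullet := by rcases hb with rfl | rfl <;> simp
  have keyv := hFv v.length (by simp)
  have keyw := hFw w.length (by simp)
  have hgv : (v ++ [b]).get ⟨v.length, by simp⟩ = b := by simp [List.get_eq_getElem]
  have hgw : (w ++ [b]).get ⟨w.length, by simp⟩ = b := by simp [List.get_eq_getElem]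
  rw [hgv] at keyv
  rw [hgw] at keyw
  have hvnot : v.length ∉ Γ := fun h => hbb (keyv.1.mpr h)
  have hwnot : w.length ∉ Γ := fun h => hbb (keyw.1.mpr h)
  have hvN : v.length + N ∈ Γ ↔ b = Symb.one := by
    rcases hb with rfl | rfl
    · exact iff_of_true (keyv.2.1.mp rfl).2 rfl
    · exact iff_of_false (keyv.2.2.mp rfl).2 (by simp)
  have hMnotinc : M ∉ inc Γ := by
    rw [← hv, mem_inc]; exact hvnot
  have hNnotinc : N ∉ inc Γ := by
    rw [← hw, mem_inc]; exact hwnot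
  have hMN : M + N ∈ inc Γ ↔ b = Symb.one := by
    rw [show M + N = (v.length + N) + 1 by omega, mem_inc]
    exact hvN
  refine ⟨⟨by simpa using hv, by simpa using hw, ?_, ?_⟩, hMN⟩
  · intro i hi
    match i with
    | 0 =>
      refine ⟨?_, ?_, ?_⟩
      · simp [List.get_cons_zero, zero_not_mem_inc]
      · constructor
        · intro h; exact absurd h (by simp [List.get_cons_zero])
        · rintro ⟨-, h2⟩; rw [zero_add] at h2; exact absurd h2 hNnotinc
      · exact iff_of_true (by simp [List.get_cons_zero]) ⟨zero_not_mem_inc, by rw [zero_add]; exact hNnotinc⟩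
    | (j + 1) =>
      simp only [List.length_cons] at hi
      have hj : j < v.length := by omega
      have key := hFv j (by simp [hj]; omega)
      have hget : (Symb.zero :: v).get ⟨j + 1, hi⟩ = (v ++ [b]).get ⟨j, by simp; omega⟩ := by
        simp [List.get_eq_getElem, List.getElem_append_left hj]
      rw [hget]
      refine ⟨?_, ?_, ?_⟩
      · rw [key.1, mem_inc]
      · rw [key.2.1]
        unfold NorthStep
        rw [mem_inc, show j + 1 + N = (j + N) + 1 by omega, mem_inc]
      · rw [key.2.2, mem_inc, show j + 1 + N = (j + N) + 1 by omega, mem_inc]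
  · intro i hi
    match i with
    | 0 =>
      refine ⟨?_, ?_, ?_⟩
      · simp [List.get_cons_zero, zero_not_mem_inc]
      · constructor
        · intro h; exact absurd h (by simp [List.get_cons_zero])
        · rintro ⟨-, h2⟩; rw [zero_add] at h2; exact absurd h2 hMnotinc
      · exact iff_of_true (by simp [List.get_cons_zero]) ⟨zero_not_mem_inc, by rw [zero_add]; exact hMnotinc⟩
    | (j + 1) =>
      simp only [List.length_cons] at hi
      have hj : j < w.length := by omega
      have key := hFw j (by simp [hj]; omega)
      have hget : (Symb.zero :: w).get ⟨j + 1, hi⟩ = (w ++ [b]).get ⟨j, by simp; omega⟩ := by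
        simp [List.get_eq_getElem, List.getElem_append_left hj]
      rw [hget]
      refine ⟨?_, ?_, ?_⟩
      · rw [key.1, mem_inc]
      · rw [key.2.1]
        unfold EastStep
        rw [mem_inc, show j + 1 + M = (j + M) + 1 by omega, mem_inc]
      · rw [key.2.2, mem_inc, show j + 1 + M = (j + M) + 1 by omega, mem_inc]

lemma zero_not_mem_of_fits {M N : ℕ} {v w : List Symb} {Δ : Set ℕ}
    (hF : Fits M N Δ (Symb.zero :: v) (Symb.zero :: w)) : 0 ∉ Δ := by
  intro h
  have := (hF.2.2.1 0 (by simp)).1.mpr h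
  simp [List.get_cons_zero] at this

end Aux

lemma bij_aux (M N : ℕ) (v w : List Symb) (hv : v.length + 1 = M) (hw : w.length + 1 = N)
    (b : Symb) (hb : b = Symb.one ∨ b = Symb.zero) :
    Set.BijOn dec
      {Δ : Set ℕ | Invariant M N Δ ∧ Fits M N Δ (Symb.zero :: v) (Symb.zero :: w) ∧
        (M + N ∈ Δ ↔ b = Symb.one)}
      {Δ : Set ℕ | Invariant M N Δ ∧ Fits M N Δ (v ++ [b]) (w ++ [b])} := by
  have hbb : b ≠ Symb.bullet := by rcases hb with rfl | rfl <;> simp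
  refine ⟨?_, ?_, ?_⟩
  · rintro Δ ⟨hInv, hF, hmem⟩
    have hb0 : b = Symb.zero ↔ M + N ∉ Δ := by rcases hb with rfl | rfl <;> simp [hmem]
    exact ⟨invariant_dec hInv, fits_dec hv hw hF b hmem.symm hb0 hbb⟩
  · rintro Δ hΔ Δ' hΔ' heq
    rw [← inc_dec (zero_not_mem_of_fits hΔ.2.1), heq, inc_dec (zero_not_mem_of_fits hΔ'.2.1)]
  · rintro Γ ⟨hInv, hF⟩
    exact ⟨inc Γ, ⟨invariant_inc hInv, (fits_inc hv hw b hb hF).1, (fits_inc hv hw b hb hF).2⟩,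
      dec_inc Γ⟩

/-- Decrementing restricts to a bijection from the `M,N`-invariant sets
fitting `(0v, 0w)` containing `M + N` onto those fitting `(v1, w1)`, and to a bijection
from the `M,N`-invariant sets fitting `(0v, 0w)` not containing `M + N` onto those
fitting `(v0, w0)`. -/
theorem dec_bijection_zero_zero (M N : ℕ) (hM : 0 < M) (hN : 0 < N)
    (v w : List Symb) (hv : v.length + 1 = M) (hw : w.length + 1 = N) :
    Set.BijOn dec
      {Δ : Set ℕ | Invariant M N Δ ∧ Fits M N Δ (Symb.zero :: v) (Symb.zero :: w) ∧
        M + N ∈ Δ}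
      {Δ : Set ℕ | Invariant M N Δ ∧ Fits M N Δ (v ++ [Symb.one]) (w ++ [Symb.one])} ∧
    Set.BijOn dec
      {Δ : Set ℕ | Invariant M N Δ ∧ Fits M N Δ (Symb.zero :: v) (Symb.zero :: w) ∧
        M + N ∉ Δ}
      {Δ : Set ℕ | Invariant M N Δ ∧ Fits M N Δ (v ++ [Symb.zero]) (w ++ [Symb.zero])} := by
  constructor
  · have e : {Δ : Set ℕ | Invariant M N Δ ∧ Fits M N Δ (Symb.zero :: v) (Symb.zero :: w) ∧
        M + N ∈ Δ} = {Δ : Set ℕ | Invariant M N Δ ∧ Fits M N Δ (Symb.zero :: v) (Symb.zero :: w) ∧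
        (M + N ∈ Δ ↔ Symb.one = Symb.one)} := by
      ext Δ; simp
    rw [e]
    exact bij_aux M N v w hv hw Symb.one (Or.inl rfl)
  · have e : {Δ : Set ℕ | Invariant M N Δ ∧ Fits M N Δ (Symb.zero :: v) (Symb.zero :: w) ∧
        M + N ∉ Δ} = {Δ : Set ℕ | Invariant M N Δ ∧ Fits M N Δ (Symb.zero :: v) (Symb.zero :: w) ∧
        (M + N ∈ Δ ↔ Symb.zero = Symb.one)} := by
      ext Δ; simp
    rw [e]
    exact bij_aux M N v w hv hw Symb.zero (Or.inr rfl)
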